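/- Let (Xₙ, πₙ) be an inverse sequence of compact, connected, locally connected metric spaces such that each bonding map πₙ is surjective and each fiber πₙ⁻¹(x) is connected. Then the inverse limit lim← (Xₙ, πₙ) is a connected and locally connected compact metric space. -/

import Mathlib

/-!
Every projection `p n` of the inverse limit onto `X n` is a closed map with connected fibres.
Indeed, the fibre over `a` is the decreasing intersection over `k` of the compact sets of
threads up to level `n + k` passing through `a`; each of these is the image, under a continuous
retraction of the product onto threads up to level `n + k`, of the cylinder over the fibre of
the composite bonding map `X (n + k) → X n`, and that fibre is connected because the bonding
maps are monotone. A closed map with connected fibres pulls connected sets back to connected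
sets, and the sets `p n ⁻¹' V` form a neighbourhood basis of the inverse limit, so the connected
open subsets of the `X n` pull back to a basis of connected open sets.
-/

open Set Topology Filter

section General

variable {α β : Type*} [TopologicalSpace α] [TopologicalSpace β]

theorem Topology.IsInducing.isConnected_image {f : α → β} {s : Set α} (hf : IsInducing f) :
    IsConnected (f '' s) ↔ IsConnected s := by
  simp only [IsConnected, hf.isPreconnected_image, image_nonempty]

theorem IsConnected.preimage_of_isClosedMap_of_fibers {f : α → β} {s : Set β}
    (hs : IsConnected s) (hf : Continuous f) (hcl : IsClosedMap f)
    (hfib : ∀ b ∈ s, IsConnected (f ⁻¹' {b})) : IsConnected (f ⁻¹' s) := by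
  set g := s.restrictPreimage f
  have hg_fib : ∀ b, IsConnected (g ⁻¹' {b}) := by
    rintro ⟨b, hb⟩
    have himage : Subtype.val '' (g ⁻¹' {⟨b, hb⟩}) = f ⁻¹' {b} := by
      ext x
      simp only [g, mem_image, mem_preimage, mem_singleton_iff, Subtype.ext_iff,
        restrictPreimage_coe, Subtype.exists, exists_and_right, exists_eq_right]
      exact ⟨fun h => h.2, fun h => ⟨h ▸ hb, h⟩⟩
    exact IsInducing.subtypeVal.isConnected_image.mp (himage ▸ hfib b hb)
  have hg : IsQuotientMap g :=
    (hcl.restrictPreimage s).isQuotientMap hf.restrictPreimage fun b => (hg_fib b).nonempty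
  have := hg.isCoinducing.isConnected_preimage_of_isClosed hg_fib isClosed_univ
    (@isConnected_univ _ _ (isConnected_iff_connectedSpace.mp hs))
  rw [preimage_univ] at this
  exact isConnected_iff_connectedSpace.mpr (connectedSpace_iff_univ.mpr this)

theorem IsConnected.iInter_of_directed [T2Space α] {ι : Type*} [Nonempty ι] {C : ι → Set α}
    (hdir : Directed (· ⊇ ·) C) (hcomp : ∀ i, IsCompact (C i))
    (hconn : ∀ i, IsConnected (C i)) : IsConnected (⋂ i, C i) := by
  set K := ⋂ i, C i
  have hK : IsCompact K := (hcomp (Classical.arbitrary ι)).of_isClosed_subset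
    (isClosed_iInter fun i => (hcomp i).isClosed) (iInter_subset _ _)
  refine ⟨IsCompact.nonempty_iInter_of_directed_nonempty_isCompact_isClosed C hdir
    (fun i => (hconn i).nonempty) hcomp fun i => (hcomp i).isClosed, ?_⟩
  rw [isPreconnected_iff_subset_of_fully_disjoint_closed hK.isClosed]
  intro u v hu hv huv hdisj
  obtain ⟨U, V, hU, hV, huU, hvV, hUV⟩ := SeparatedNhds.of_isCompact_isCompact
    (hK.inter_right hu) (hK.inter_right hv) (hdisj.mono inter_subset_right inter_subset_right)
  have hKUV : K ⊆ U ∪ V := fun x hx =>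
    (huv hx).imp (fun h => huU ⟨hx, h⟩) (fun h => hvV ⟨hx, h⟩)
  obtain ⟨i, hi⟩ := exists_subset_nhds_of_isCompact hdir hcomp
    fun x hx => (hU.union hV).mem_nhds (hKUV hx)
  have hKi : K ⊆ C i := iInter_subset _ i
  rcases (hconn i).isPreconnected.subset_or_subset hU hV hUV hi with hiU | hiV
  · exact Or.inl fun x hx => (huv hx).resolve_right fun hxv =>
      hUV.ne_of_mem (hiU (hKi hx)) (hvV ⟨hx, hxv⟩) rfl
  · exact Or.inr fun x hx => (huv hx).resolve_left fun hxu =>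
      hUV.ne_of_mem (huU ⟨hx, hxu⟩) (hiV (hKi hx)) rfl

theorem ConnectedSpace.of_isClosedMap_of_fibers [ConnectedSpace β] {f : α → β}
    (hf : Continuous f) (hcl : IsClosedMap f) (hfib : ∀ b, IsConnected (f ⁻¹' {b})) :
    ConnectedSpace α := by
  have := isConnected_univ.preimage_of_isClosedMap_of_fibers hf hcl fun b _ => hfib b
  rwa [preimage_univ, ← connectedSpace_iff_univ] at this

theorem LocallyConnectedSpace.of_isClosedMap_of_fibers {ι : Type*} {β : ι → Type*}
    [∀ i, TopologicalSpace (β i)] [∀ i, LocallyConnectedSpace (β i)] (g : ∀ i, α → β i)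
    (hg : ∀ i, Continuous (g i)) (hcl : ∀ i, IsClosedMap (g i))
    (hfib : ∀ i b, IsConnected (g i ⁻¹' {b}))
    (hnhds : ∀ x, ∀ U ∈ 𝓝 x, ∃ i, ∃ V ∈ 𝓝 (g i x), g i ⁻¹' V ⊆ U) :
    LocallyConnectedSpace α := by
  refine locallyConnectedSpace_iff_subsets_isOpen_isConnected.mpr fun x U hU => ?_
  obtain ⟨i, V, hV, hVU⟩ := hnhds x U hU
  obtain ⟨V₀, hV₀V, hV₀, hxV₀, hV₀conn⟩ :=
    locallyConnectedSpace_iff_subsets_isOpen_isConnected.mp inferInstance (g i x) V hV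
  exact ⟨g i ⁻¹' V₀, (preimage_mono hV₀V).trans hVU, hV₀.preimage (hg i), hxV₀,
    hV₀conn.preimage_of_isClosedMap_of_fibers (hg i) (hcl i) fun b _ => hfib i b⟩

theorem isConnected_eval_preimage {ι : Type*} {π : ι → Type*} [∀ i, TopologicalSpace (π i)]
    [∀ i, ConnectedSpace (π i)] {j : ι} {T : Set (π j)} (hT : IsConnected T) :
    IsConnected (Function.eval j ⁻¹' T) := by
  classical
  rw [eval_preimage, isConnected_univ_pi]
  intro i
  by_cases hi : i = j
  · subst hi
    simpa using hT
  · simpa [Function.update_of_ne hi] using isConnected_univ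

end General

section InverseSequence

variable {X : ℕ → Type*} (f : ∀ n, X (n + 1) → X n)

def threads : Set (∀ n, X n) := {x | ∀ n, f n (x (n + 1)) = x n}

def partialThreads (K : ℕ) : Set (∀ n, X n) := {y | ∀ i < K, f i (y (i + 1)) = y i}

def bondingMap (m : ℕ) : (k : ℕ) → X (m + k) → X m
  | 0 => id
  | k + 1 => bondingMap m k ∘ f (m + k)

/-- Overwrites the coordinates `K - 1, …, 0` in turn by the image of the coordinate above:
a retraction of the product onto `partialThreads f K`. -/
def threadRetract : ℕ → (∀ n, X n) → ∀ n, X n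
  | 0 => id
  | K + 1 => threadRetract K ∘ fun y => Function.update y K (f K (y (K + 1)))

variable {f}

theorem partialThreads_antitone : Antitone (partialThreads f) :=
  fun _ _ hJK _ hy i hi => hy i (lt_of_lt_of_le hi hJK)

theorem bondingMap_apply_of_mem {m k : ℕ} {y : ∀ n, X n} (hy : y ∈ partialThreads f (m + k)) :
    bondingMap f m k (y (m + k)) = y m := by
  induction k with
  | zero => rfl
  | succ k ih =>
    change bondingMap f m k (f (m + k) (y (m + k + 1))) = y m
    rw [hy (m + k) (by omega)]
    exact ih (partialThreads_antitone (by omega) hy)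

theorem threadRetract_apply_of_le {K m : ℕ} (hKm : K ≤ m) (y : ∀ n, X n) :
    threadRetract f K y m = y m := by
  induction K generalizing y with
  | zero => rfl
  | succ K ih =>
    change threadRetract f K (Function.update y K _) m = y m
    rw [ih (by omega), Function.update_of_ne (by omega)]

theorem threadRetract_mem (K : ℕ) (y : ∀ n, X n) :
    threadRetract f K y ∈ partialThreads f K := by
  induction K generalizing y with
  | zero => exact fun i hi => absurd hi (Nat.not_lt_zero i)
  | succ K ih =>
    intro i hi
    rcases Nat.lt_succ_iff_lt_or_eq.mp hi with hi | rfl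
    · exact ih _ i hi
    · change f i (threadRetract f i (Function.update y i _) (i + 1)) =
        threadRetract f i (Function.update y i _) i
      rw [threadRetract_apply_of_le le_rfl, threadRetract_apply_of_le (by omega),
        Function.update_self, Function.update_of_ne (by omega)]

theorem threadRetract_eq_self {K : ℕ} {y : ∀ n, X n} (hy : y ∈ partialThreads f K) :
    threadRetract f K y = y := by
  induction K with
  | zero => rfl
  | succ K ih =>
    change threadRetract f K (Function.update y K (f K (y (K + 1)))) = y
    rw [hy K K.lt_succ_self, Function.update_eq_self]
    exact ih (partialThreads_antitone K.le_succ hy)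

theorem partialThreads_inter_fiber_eq_image {n k : ℕ} {a : X n} :
    partialThreads f (n + k) ∩ {y | y n = a} =
      threadRetract f (n + k) '' (Function.eval (n + k) ⁻¹' (bondingMap f n k ⁻¹' {a})) := by
  ext y
  constructor
  · rintro ⟨hy, rfl⟩
    exact ⟨y, bondingMap_apply_of_mem hy, threadRetract_eq_self hy⟩
  · rintro ⟨z, hz, rfl⟩
    refine ⟨threadRetract_mem _ z, ?_⟩
    rw [mem_ofPred_eq, ← bondingMap_apply_of_mem (threadRetract_mem _ z),
      threadRetract_apply_of_le le_rfl]
    exact hz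

variable [∀ n, TopologicalSpace (X n)]

theorem isClosed_partialThreads [∀ n, T2Space (X n)] (hf : ∀ n, Continuous (f n)) (K : ℕ) :
    IsClosed (partialThreads f K) := by
  simp only [partialThreads, ofPred_forall]
  exact isClosed_iInter fun i => isClosed_iInter fun _ =>
    isClosed_eq ((hf i).comp (continuous_apply (i + 1))) (continuous_apply i)

theorem isClosed_threads [∀ n, T2Space (X n)] (hf : ∀ n, Continuous (f n)) :
    IsClosed (threads f) := by
  simp only [threads, ofPred_forall]
  exact isClosed_iInter fun n =>
    isClosed_eq ((hf n).comp (continuous_apply (n + 1))) (continuous_apply n)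

theorem continuous_bondingMap (hf : ∀ n, Continuous (f n)) (m : ℕ) :
    ∀ k, Continuous (bondingMap f m k)
  | 0 => continuous_id
  | k + 1 => (continuous_bondingMap hf m k).comp (hf (m + k))

theorem continuous_threadRetract (hf : ∀ n, Continuous (f n)) :
    ∀ K, Continuous (threadRetract f K)
  | 0 => continuous_id
  | K + 1 => (continuous_threadRetract hf K).comp
      (continuous_id.update K ((hf K).comp (continuous_apply _)))

theorem isConnected_bondingMap_preimage_singleton [∀ n, CompactSpace (X n)] [∀ n, T2Space (X n)]
    (hf : ∀ n, Continuous (f n)) (hfib : ∀ n (x : X n), IsConnected (f n ⁻¹' {x}))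
    (m k : ℕ) (a : X m) : IsConnected (bondingMap f m k ⁻¹' {a}) := by
  induction k with
  | zero => exact isConnected_singleton
  | succ k ih =>
    exact ih.preimage_of_isClosedMap_of_fibers (hf _) (hf _).isClosedMap fun b _ => hfib _ b

theorem threads_exists_proj_preimage_subset (hf : ∀ n, Continuous (f n)) (x : threads f)
    {U : Set (threads f)} (hU : U ∈ 𝓝 x) :
    ∃ n, ∃ V ∈ 𝓝 (x.1 n), (fun y : threads f => y.1 n) ⁻¹' V ⊆ U := by
  set N : ℕ → Filter (threads f) := fun n => comap (fun y => y.1 n) (𝓝 (x.1 n))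
  have hN : 𝓝 x = ⨅ n, N n := by
    simp only [N, nhds_subtype, nhds_pi, Filter.pi, comap_iInf, comap_comap]
    rfl
  have hN_anti : Antitone N := antitone_nat_of_succ_le fun n => by
    have hproj : (fun y : threads f => y.1 n) = f n ∘ fun y => y.1 (n + 1) :=
      funext fun y => (y.2 n).symm
    simp only [N, hproj, ← comap_comap, ← x.2 n]
    exact comap_mono ((hf n).tendsto _).le_comap
  rw [hN, mem_iInf_of_directed hN_anti.directed_ge] at hU
  obtain ⟨n, hn⟩ := hU
  exact ⟨n, mem_comap.mp hn⟩

variable [∀ n, CompactSpace (X n)] [∀ n, T2Space (X n)] [∀ n, ConnectedSpace (X n)]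

theorem isConnected_partialThreads_inter_fiber (hf : ∀ n, Continuous (f n))
    (hfib : ∀ n (x : X n), IsConnected (f n ⁻¹' {x})) (n k : ℕ) (a : X n) :
    IsConnected (partialThreads f (n + k) ∩ {y | y n = a}) := by
  rw [partialThreads_inter_fiber_eq_image]
  exact (isConnected_eval_preimage (isConnected_bondingMap_preimage_singleton hf hfib n k a)).image
    _ (continuous_threadRetract hf _).continuousOn

theorem isConnected_threads_inter_fiber (hf : ∀ n, Continuous (f n))
    (hfib : ∀ n (x : X n), IsConnected (f n ⁻¹' {x})) (n : ℕ) (a : X n) :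
    IsConnected (threads f ∩ {y | y n = a}) := by
  have hiInter : threads f ∩ {y | y n = a} =
      ⋂ k, partialThreads f (n + k) ∩ {y | y n = a} := by
    ext y
    simp only [threads, partialThreads, mem_inter_iff, mem_ofPred_eq, mem_iInter]
    exact ⟨fun ⟨hy, hyn⟩ k => ⟨fun i _ => hy i, hyn⟩,
      fun h => ⟨fun i => (h (i + 1)).1 i (by omega), (h 0).2⟩⟩
  rw [hiInter]
  refine IsConnected.iInter_of_directed ?_ (fun k => ?_)
    (fun k => isConnected_partialThreads_inter_fiber hf hfib n k a)
  · exact Antitone.directed_ge fun j k hjk =>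
      inter_subset_inter_left _ (partialThreads_antitone (by omega))
  · exact ((isClosed_partialThreads hf _).inter
      (isClosed_eq (continuous_apply n) continuous_const)).isCompact

theorem isConnected_threads_proj_preimage_singleton (hf : ∀ n, Continuous (f n))
    (hfib : ∀ n (x : X n), IsConnected (f n ⁻¹' {x})) (n : ℕ) (a : X n) :
    IsConnected ((fun y : threads f => y.1 n) ⁻¹' {a}) := by
  rw [← IsInducing.subtypeVal.isConnected_image]
  exact Subtype.image_preimage_coe (threads f) {y | y n = a} ▸
    isConnected_threads_inter_fiber hf hfib n a

end InverseSequence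

theorem stmt3 (X : ℕ → Type) [∀ n, MetricSpace (X n)] [∀ n, CompactSpace (X n)]
    [∀ n, ConnectedSpace (X n)] [∀ n, LocallyConnectedSpace (X n)]
    (f : ∀ n, X (n+1) → X n) (hf : ∀ n, Continuous (f n))
    (hfib : ∀ n (x : X n), IsConnected (f n ⁻¹' {x})) :
    ConnectedSpace {x : ∀ n, X n // ∀ n, f n (x (n+1)) = x n} ∧
    LocallyConnectedSpace {x : ∀ n, X n // ∀ n, f n (x (n+1)) = x n} ∧
    CompactSpace {x : ∀ n, X n // ∀ n, f n (x (n+1)) = x n} ∧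
    TopologicalSpace.MetrizableSpace {x : ∀ n, X n // ∀ n, f n (x (n+1)) = x n} := by
  have hcompact : CompactSpace (threads f) :=
    isCompact_iff_compactSpace.mp (isClosed_threads hf).isCompact
  have hproj : ∀ n, Continuous fun y : threads f => y.1 n :=
    fun n => (continuous_apply n).comp continuous_subtype_val
  have hclosed : ∀ n, IsClosedMap fun y : threads f => y.1 n := fun n => (hproj n).isClosedMap
  have hfib' := isConnected_threads_proj_preimage_singleton hf hfib
  exact ⟨.of_isClosedMap_of_fibers (hproj 0) (hclosed 0) (hfib' 0),
    .of_isClosedMap_of_fibers _ hproj hclosed hfib'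
      fun x _ => threads_exists_proj_preimage_subset hf x,
    hcompact, (inferInstance : TopologicalSpace.MetrizableSpace (threads f))⟩
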